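/- arXiv:2109.08644 — 3 statements merged into one kernel-verified Lean document; each statement's English description precedes it below -/
import Mathlib

section
/- In every pure Nash equilibrium of the Mod-Cut&Choose mechanism for two agents, the resulting allocation gives each agent i value at least her maximin share μ_i(2, M), with respect to the true additive valuations. -/
/-!
Agent 1 can force any bipartition `{S, Sᶜ}` as the outcome of the cut phase: bid 1 on a good
exactly when the next good in her processing order lies on the other side of the bipartition,
and 0 otherwise. The bid surplus of the first bundle is then 0 before each good of the first
bundle and 1 before each good of the second, so every good lands on its intended side. Whatever
agent 2 chooses, agent 1 keeps `S` or `Sᶜ`, so in an equilibrium she gets at least `μ₁`.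
Agent 2, bidding truthfully, gets the more valuable of two complementary bundles, hence at
least `v₂(M)/2 ≥ μ₂`.
-/

open Finset

/-- The goods sorted in decreasing order of agent 1's true values, ties broken
lexicographically. -/
noncomputable def sortedGoods {m : ℕ} (v1 : Fin m → ℝ) : List (Fin m) :=
  (List.finRange m).mergeSort
    (fun g h => @decide (v1 h < v1 g ∨ (v1 g = v1 h ∧ g ≤ h)) (Classical.propDecidable _))

/-- The cut phase of Mod-Cut&Choose: goods are processed in decreasing order of agent 1's
true values `v1` (ties lexicographic) and each good is added to the bundle with the smaller
total reported bid `b1` (ties in favor of the first bundle). -/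
noncomputable def cutPhase {m : ℕ} (v1 b1 : Fin m → ℝ) : Finset (Fin m) × Finset (Fin m) :=
  (sortedGoods v1).foldl
    (fun E g =>
      if ∑ x ∈ E.1, b1 x ≤ ∑ x ∈ E.2, b1 x then (insert g E.1, E.2) else (E.1, insert g E.2))
    (∅, ∅)

/-- The Mod-Cut&Choose mechanism: after the cut phase, agent 2 receives the bundle with the
larger total bid `b2` (ties in favor of the first bundle) and agent 1 receives the other
bundle. The output is the pair (bundle of agent 1, bundle of agent 2). -/
noncomputable def modCC {m : ℕ} (v1 b1 b2 : Fin m → ℝ) : Finset (Fin m) × Finset (Fin m) :=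
  let E := cutPhase v1 b1
  if ∑ x ∈ E.2, b2 x ≤ ∑ x ∈ E.1, b2 x then (E.2, E.1) else (E.1, E.2)

/-- The maximin share for two agents: maximum over bipartitions of all goods of the
minimum of the two bundle values. -/
noncomputable def mms2 {m : ℕ} (v : Fin m → ℝ) : ℝ :=
  sSup {x : ℝ | ∃ S : Finset (Fin m), x = min (∑ g ∈ S, v g) (∑ g ∈ Sᶜ, v g)}

section Greedy

variable {α : Type*} [DecidableEq α]

noncomputable def cutStep (b : α → ℝ) (E : Finset α × Finset α) (g : α) : Finset α × Finset α :=
  if ∑ x ∈ E.1, b x ≤ ∑ x ∈ E.2, b x then (insert g E.1, E.2) else (E.1, insert g E.2)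

lemma foldl_cutStep_snd_eq_compl [Fintype α] (b : α → ℝ) :
    ∀ {l : List α} {E : Finset α × Finset α}, l.Nodup → Disjoint E.1 l.toFinset →
      E.2 = (E.1 ∪ l.toFinset)ᶜ → (l.foldl (cutStep b) E).2 = (l.foldl (cutStep b) E).1ᶜ
  | [], E, _, _, hE => by simpa using hE
  | g :: t, E, hnd, hdisj, hE => by
    rw [List.nodup_cons] at hnd
    rw [List.toFinset_cons, Finset.disjoint_insert_right] at hdisj
    rw [List.foldl_cons]
    refine foldl_cutStep_snd_eq_compl b hnd.2 ?_ ?_ <;> unfold cutStep <;> split_ifs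
    · exact Finset.disjoint_insert_left.2 ⟨by simpa using hnd.1, hdisj.2⟩
    · exact hdisj.2
    all_goals rw [hE]; ext x; by_cases hx : x = g <;> simp [hx, hnd.1, hdisj.1]

lemma foldl_cutStep_fst_eq_of_isChain {T : Finset α} {b : α → ℝ} :
    ∀ {l : List α} {E : Finset α × Finset α}, l.Nodup → (∀ g ∈ l, g ∉ E.1 ∧ g ∉ E.2) →
      l.IsChain (fun g h => b g = if (g ∈ T ↔ h ∈ T) then 0 else 1) →
      (∀ g ∈ l.head?, ∑ x ∈ E.1, b x = ∑ x ∈ E.2, b x + if g ∈ T then 0 else 1) →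
      (l.foldl (cutStep b) E).1 = E.1 ∪ {g ∈ l.toFinset | g ∈ T}
  | [], E, _, _, _, _ => by simp
  | g :: t, E, hnd, hfresh, hchain, hhead => by
    rw [List.nodup_cons] at hnd
    obtain ⟨hg1, hg2⟩ := hfresh g List.mem_cons_self
    have hD := hhead g rfl
    have hfresh_t : ∀ x ∈ t, x ≠ g ∧ x ∉ E.1 ∧ x ∉ E.2 := fun x hx =>
      ⟨ne_of_mem_of_not_mem hx hnd.1, hfresh x (List.mem_cons_of_mem g hx)⟩
    have hnext : ∀ h ∈ t.head?, b g = if (g ∈ T ↔ h ∈ T) then 0 else 1 := by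
      intro h hh
      obtain ⟨t', rfl⟩ := List.head?_eq_some_iff.1 hh
      exact (List.isChain_cons_cons.1 hchain).1
    have hstep : cutStep b E g = if g ∈ T then (insert g E.1, E.2) else (E.1, insert g E.2) := by
      unfold cutStep
      by_cases hgT : g ∈ T
      · rw [if_pos hgT, if_pos (by simp [hgT] at hD; linarith)]
      · rw [if_neg hgT, if_neg (by simp [hgT] at hD; linarith)]
    rw [List.foldl_cons, hstep]
    split_ifs with hgT <;>
      refine (foldl_cutStep_fst_eq_of_isChain hnd.2 (fun x hx => by simp [hfresh_t x hx])
        hchain.tail fun h hh => ?_).trans ?_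
    · rw [Finset.sum_insert hg1, hD, hnext h hh]
      by_cases hhT : h ∈ T <;> simp [hgT, hhT, add_comm]
    · ext x; by_cases hx : x = g <;> simp [hx, hgT]
    · rw [Finset.sum_insert hg2, hD, hnext h hh]
      by_cases hhT : h ∈ T <;> simp [hgT, hhT, add_comm]
    · ext x; by_cases hx : x = g <;> simp [hx, hgT]

lemma exists_nonneg_bid_isChain (T : Finset α) :
    ∀ {l : List α}, l.Nodup → ∃ b : α → ℝ, (∀ g, 0 ≤ b g) ∧
      l.IsChain (fun g h => b g = if (g ∈ T ↔ h ∈ T) then 0 else 1)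
  | [], _ => ⟨0, fun _ => le_rfl, List.isChain_nil⟩
  | [g], _ => ⟨0, fun _ => le_rfl, List.isChain_singleton g⟩
  | g :: h :: t, hnd => by
    rw [List.nodup_cons] at hnd
    obtain ⟨b, hb, hchain⟩ := exists_nonneg_bid_isChain T hnd.2
    refine ⟨Function.update b g (if (g ∈ T ↔ h ∈ T) then 0 else 1), fun x => ?_, ?_⟩
    · rcases eq_or_ne x g with rfl | hx
      · rw [Function.update_self]; split_ifs <;> norm_num
      · rw [Function.update_of_ne hx]; exact hb x
    · refine List.IsChain.cons_cons (Function.update_self ..) (hchain.imp_of_mem_imp ?_)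
      intro x _ hx _ hxy
      rwa [Function.update_of_ne (ne_of_mem_of_not_mem hx hnd.1)]

end Greedy

section ModCC

variable {m : ℕ}

lemma cutPhase_eq_foldl (v1 b1 : Fin m → ℝ) :
    cutPhase v1 b1 = (sortedGoods v1).foldl (cutStep b1) (∅, ∅) :=
  rfl

lemma sortedGoods_perm (v1 : Fin m → ℝ) : (sortedGoods v1).Perm (List.finRange m) :=
  List.mergeSort_perm _ _

lemma sortedGoods_nodup (v1 : Fin m → ℝ) : (sortedGoods v1).Nodup :=
  (sortedGoods_perm v1).nodup_iff.2 (List.nodup_finRange m)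

lemma sortedGoods_toFinset (v1 : Fin m → ℝ) : (sortedGoods v1).toFinset = univ :=
  (List.toFinset_eq_of_perm _ _ (sortedGoods_perm v1)).trans (List.toFinset_finRange m)

lemma cutPhase_snd_eq_compl (v1 b1 : Fin m → ℝ) : (cutPhase v1 b1).2 = (cutPhase v1 b1).1ᶜ :=
  foldl_cutStep_snd_eq_compl b1 (sortedGoods_nodup v1) (by simp) (by simp [sortedGoods_toFinset])

lemma exists_nonneg_cutPhase_eq {v1 : Fin m → ℝ} {T : Finset (Fin m)}
    (hT : ∀ g ∈ (sortedGoods v1).head?, g ∈ T) :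
    ∃ b : Fin m → ℝ, (∀ g, 0 ≤ b g) ∧ cutPhase v1 b = (T, Tᶜ) := by
  obtain ⟨b, hb, hchain⟩ := exists_nonneg_bid_isChain T (sortedGoods_nodup v1)
  have hfst : (cutPhase v1 b).1 = T := by
    rw [cutPhase_eq_foldl, foldl_cutStep_fst_eq_of_isChain (sortedGoods_nodup v1) (by simp) hchain
      fun g hg => by simp [hT g hg], sortedGoods_toFinset]
    simp
  exact ⟨b, hb, Prod.ext hfst (by rw [cutPhase_snd_eq_compl, hfst])⟩

lemma exists_nonneg_cutPhase_eq_or_swap (v1 : Fin m → ℝ) (S : Finset (Fin m)) :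
    ∃ b : Fin m → ℝ, (∀ g, 0 ≤ b g) ∧ (cutPhase v1 b = (S, Sᶜ) ∨ cutPhase v1 b = (Sᶜ, S)) := by
  by_cases hS : ∀ g ∈ (sortedGoods v1).head?, g ∈ S
  · obtain ⟨b, hb, h⟩ := exists_nonneg_cutPhase_eq hS
    exact ⟨b, hb, .inl h⟩
  · push Not at hS
    obtain ⟨g, hg, hgS⟩ := hS
    obtain ⟨b, hb, h⟩ := exists_nonneg_cutPhase_eq (T := Sᶜ) fun g' hg' => by
      rwa [Option.mem_unique hg' hg, mem_compl]
    exact ⟨b, hb, .inr (by rwa [compl_compl] at h)⟩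

lemma modCC_fst_eq_or (v1 b1 b2 : Fin m → ℝ) :
    (modCC v1 b1 b2).1 = (cutPhase v1 b1).1 ∨ (modCC v1 b1 b2).1 = (cutPhase v1 b1).2 := by
  dsimp only [modCC]
  split_ifs
  exacts [.inr rfl, .inl rfl]

lemma sum_modCC_snd_self (v1 b1 b2 : Fin m → ℝ) :
    ∑ x ∈ (modCC v1 b1 b2).2, b2 x =
      max (∑ x ∈ (cutPhase v1 b1).1, b2 x) (∑ x ∈ (cutPhase v1 b1).2, b2 x) := by
  dsimp only [modCC]
  split_ifs with h
  · exact (max_eq_left h).symm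
  · exact (max_eq_right (not_le.1 h).le).symm

lemma mms2_le {v : Fin m → ℝ} {a : ℝ}
    (h : ∀ S : Finset (Fin m), min (∑ g ∈ S, v g) (∑ g ∈ Sᶜ, v g) ≤ a) : mms2 v ≤ a :=
  csSup_le ⟨_, ∅, rfl⟩ fun _ ⟨S, hS⟩ => hS ▸ h S

lemma mms2_le_max_sum_compl (v : Fin m → ℝ) (E : Finset (Fin m)) :
    mms2 v ≤ max (∑ g ∈ E, v g) (∑ g ∈ Eᶜ, v g) :=
  mms2_le fun S => by
    linarith [sum_add_sum_compl S v, sum_add_sum_compl E v, min_le_left (∑ g ∈ S, v g)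
      (∑ g ∈ Sᶜ, v g), min_le_right (∑ g ∈ S, v g) (∑ g ∈ Sᶜ, v g),
      le_max_left (∑ g ∈ E, v g) (∑ g ∈ Eᶜ, v g), le_max_right (∑ g ∈ E, v g) (∑ g ∈ Eᶜ, v g)]

end ModCC

theorem modCC_PNE_MMS_general {m : ℕ} (v1 v2 b1 b2 : Fin m → ℝ)
    (hv2 : ∀ g, 0 ≤ v2 g)
    (hPNE1 : ∀ b1' : Fin m → ℝ, (∀ g, 0 ≤ b1' g) →
      ∑ x ∈ (modCC v1 b1' b2).1, v1 x ≤ ∑ x ∈ (modCC v1 b1 b2).1, v1 x)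
    (hPNE2 : ∀ b2' : Fin m → ℝ, (∀ g, 0 ≤ b2' g) →
      ∑ x ∈ (modCC v1 b1 b2').2, v2 x ≤ ∑ x ∈ (modCC v1 b1 b2).2, v2 x) :
    mms2 v1 ≤ ∑ x ∈ (modCC v1 b1 b2).1, v1 x ∧
    mms2 v2 ≤ ∑ x ∈ (modCC v1 b1 b2).2, v2 x := by
  constructor
  · refine mms2_le fun S => ?_
    obtain ⟨b, hb, hcut⟩ := exists_nonneg_cutPhase_eq_or_swap v1 S
    refine le_trans ?_ (hPNE1 b hb)
    rcases modCC_fst_eq_or v1 b b2 with h | h <;> rcases hcut with hc | hc <;> simp [h, hc]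
  · calc mms2 v2 ≤ max (∑ x ∈ (cutPhase v1 b1).1, v2 x) (∑ x ∈ (cutPhase v1 b1).2, v2 x) := by
          rw [cutPhase_snd_eq_compl]
          exact mms2_le_max_sum_compl v2 _
      _ = ∑ x ∈ (modCC v1 b1 v2).2, v2 x := (sum_modCC_snd_self v1 b1 v2).symm
      _ ≤ _ := hPNE2 v2 hv2

/-- in every pure Nash equilibrium of Mod-Cut&Choose for two agents, each agent
receives value at least her maximin share with respect to the true valuations. -/
theorem modCC_PNE_MMS {m : ℕ} (v1 v2 b1 b2 : Fin m → ℝ)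
    (hv1 : ∀ g, 0 ≤ v1 g) (hv2 : ∀ g, 0 ≤ v2 g)
    (hb1 : ∀ g, 0 ≤ b1 g) (hb2 : ∀ g, 0 ≤ b2 g)
    (hPNE1 : ∀ b1' : Fin m → ℝ, (∀ g, 0 ≤ b1' g) →
      ∑ x ∈ (modCC v1 b1' b2).1, v1 x ≤ ∑ x ∈ (modCC v1 b1 b2).1, v1 x)
    (hPNE2 : ∀ b2' : Fin m → ℝ, (∀ g, 0 ≤ b2' g) →
      ∑ x ∈ (modCC v1 b1 b2').2, v2 x ≤ ∑ x ∈ (modCC v1 b1 b2).2, v2 x) :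
    mms2 v1 ≤ ∑ x ∈ (modCC v1 b1 b2).1, v1 x ∧
    mms2 v2 ≤ ∑ x ∈ (modCC v1 b1 b2).2, v2 x :=
  modCC_PNE_MMS_general v1 v2 b1 b2 hv2 hPNE1 hPNE2
end

section
/- Consider two agents and four goods. If agent i has positive value for at most three of the four goods, then in every allocation that is EFX from agent i's point of view, agent i receives value at least her maximin share μ_i(2, M). -/
lemma key_min_le
    (v : Fin 4 → ℝ) (hv : ∀ g, 0 ≤ v g)
    (hthree : (Finset.univ.filter (fun g => 0 < v g)).card ≤ 3)
    (A : Finset (Fin 4))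
    (hefx : ∀ g ∈ Aᶜ, 0 < v g → ∑ x ∈ Aᶜ.erase g, v x ≤ ∑ x ∈ A, v x)
    (S : Finset (Fin 4)) :
    min (∑ g ∈ S, v g) (∑ g ∈ Sᶜ, v g) ≤ ∑ x ∈ A, v x := by
  by_contra h
  push_neg at h
  rw [lt_min_iff] at h
  obtain ⟨h1, h2⟩ := h
  -- if a set has no positive-valued good outside A, its sum is ≤ sum over A
  have hx : ∀ T : Finset (Fin 4), (∀ g ∈ T \ A, ¬ 0 < v g) →
      ∑ g ∈ T, v g ≤ ∑ x ∈ A, v x := by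
    intro T hT
    have hzero : ∑ g ∈ T \ A, v g = 0 :=
      Finset.sum_eq_zero fun g hg => le_antisymm (not_lt.mp (hT g hg)) (hv g)
    calc ∑ g ∈ T, v g = ∑ g ∈ T ∩ A, v g + ∑ g ∈ T \ A, v g :=
          (Finset.sum_inter_add_sum_sdiff T A v).symm
      _ = ∑ g ∈ T ∩ A, v g := by rw [hzero, add_zero]
      _ ≤ ∑ x ∈ A, v x :=
          Finset.sum_le_sum_of_subset_of_nonneg Finset.inter_subset_right
            (fun i _ _ => hv i)
  obtain ⟨g1, hg1, hg1pos⟩ : ∃ g ∈ S \ A, 0 < v g := by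
    by_contra hc
    push_neg at hc
    exact absurd (hx S fun g hg => not_lt.mpr (hc g hg)) (not_le.mpr h1)
  obtain ⟨g2, hg2, hg2pos⟩ : ∃ g ∈ Sᶜ \ A, 0 < v g := by
    by_contra hc
    push_neg at hc
    exact absurd (hx Sᶜ fun g hg => not_lt.mpr (hc g hg)) (not_le.mpr h2)
  have hg1S : g1 ∈ S := (Finset.mem_sdiff.mp hg1).1
  have hg1A : g1 ∉ A := (Finset.mem_sdiff.mp hg1).2
  have hg2S : g2 ∉ S := Finset.mem_compl.mp (Finset.mem_sdiff.mp hg2).1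
  have hg2A : g2 ∉ A := (Finset.mem_sdiff.mp hg2).2
  have hne : g1 ≠ g2 := fun hmm => hg2S (hmm ▸ hg1S)
  -- at most one positive good inside A
  have hcard : (A.filter (fun g => 0 < v g)).card ≤ 1 := by
    have hsub : A.filter (fun g => 0 < v g) ∪ {g1, g2} ⊆
        Finset.univ.filter (fun g => 0 < v g) := by
      intro g hg
      rcases Finset.mem_union.mp hg with hg | hg
      · exact Finset.mem_filter.mpr ⟨Finset.mem_univ g, (Finset.mem_filter.mp hg).2⟩
      · rcases Finset.mem_insert.mp hg with rfl | hg
        · exact Finset.mem_filter.mpr ⟨Finset.mem_univ g, hg1pos⟩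
        · rw [Finset.mem_singleton] at hg
          subst hg
          exact Finset.mem_filter.mpr ⟨Finset.mem_univ g, hg2pos⟩
    have hdisj : Disjoint (A.filter (fun g => 0 < v g)) ({g1, g2} : Finset (Fin 4)) := by
      rw [Finset.disjoint_right]
      intro g hg hgA
      rcases Finset.mem_insert.mp hg with rfl | hg
      · exact hg1A (Finset.mem_filter.mp hgA).1
      · rw [Finset.mem_singleton] at hg
        subst hg
        exact hg2A (Finset.mem_filter.mp hgA).1
    have hc2 : ({g1, g2} : Finset (Fin 4)).card = 2 := by
      rw [Finset.card_insert_of_notMem (by simpa using hne), Finset.card_singleton]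
    have := Finset.card_le_card hsub
    rw [Finset.card_union_of_disjoint hdisj, hc2] at this
    omega
  -- not both S∩A and Sᶜ∩A contain a positive good
  have hcases : (∀ g ∈ Sᶜ ∩ A, ¬ 0 < v g) ∨ (∀ g ∈ S ∩ A, ¬ 0 < v g) := by
    by_contra hc
    push_neg at hc
    obtain ⟨⟨b, hb, hbpos⟩, ⟨a, ha, hapos⟩⟩ := hc
    have hbS : b ∉ S := Finset.mem_compl.mp (Finset.mem_inter.mp hb).1
    have haS : a ∈ S := (Finset.mem_inter.mp ha).1
    have hab : a ≠ b := fun hmm => hbS (hmm ▸ haS)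
    have hsub : ({a, b} : Finset (Fin 4)) ⊆ A.filter (fun g => 0 < v g) := by
      intro g hg
      rcases Finset.mem_insert.mp hg with rfl | hg
      · exact Finset.mem_filter.mpr ⟨(Finset.mem_inter.mp ha).2, hapos⟩
      · rw [Finset.mem_singleton] at hg
        subst hg
        exact Finset.mem_filter.mpr ⟨(Finset.mem_inter.mp hb).2, hbpos⟩
    have hc2 : ({a, b} : Finset (Fin 4)).card = 2 := by
      rw [Finset.card_insert_of_notMem (by simpa using hab), Finset.card_singleton]
    have := Finset.card_le_card hsub
    omega
  have hbound : ∀ (T : Finset (Fin 4)) (g : Fin 4), g ∈ Aᶜ → 0 < v g →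
      (∀ x ∈ T ∩ A, ¬ 0 < v x) → T \ A ⊆ Aᶜ.erase g →
      ∑ x ∈ T, v x ≤ ∑ x ∈ A, v x := by
    intro T g hgA hgpos hTA hsub
    have hzero : ∑ x ∈ T ∩ A, v x = 0 :=
      Finset.sum_eq_zero fun x hx => le_antisymm (not_lt.mp (hTA x hx)) (hv x)
    calc ∑ x ∈ T, v x = ∑ x ∈ T ∩ A, v x + ∑ x ∈ T \ A, v x :=
          (Finset.sum_inter_add_sum_sdiff T A v).symm
      _ = ∑ x ∈ T \ A, v x := by rw [hzero, zero_add]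
      _ ≤ ∑ x ∈ Aᶜ.erase g, v x :=
          Finset.sum_le_sum_of_subset_of_nonneg hsub (fun i _ _ => hv i)
      _ ≤ ∑ x ∈ A, v x := hefx g hgA hgpos
  rcases hcases with hc | hc
  · -- use g1 against Sᶜ
    refine absurd (hbound Sᶜ g1 (Finset.mem_compl.mpr hg1A) hg1pos hc ?_) (not_le.mpr h2)
    intro x hx
    obtain ⟨hx1, hx2⟩ := Finset.mem_sdiff.mp hx
    refine Finset.mem_erase.mpr ⟨?_, Finset.mem_compl.mpr hx2⟩
    rintro rfl
    exact Finset.mem_compl.mp hx1 hg1S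
  · -- use g2 against S
    refine absurd (hbound S g2 (Finset.mem_compl.mpr hg2A) hg2pos hc ?_) (not_le.mpr h1)
    intro x hx
    obtain ⟨hx1, hx2⟩ := Finset.mem_sdiff.mp hx
    refine Finset.mem_erase.mpr ⟨?_, Finset.mem_compl.mpr hx2⟩
    rintro rfl
    exact hg2S hx1

/-- with two agents and four goods, if agent i has positive value for at most
three goods, then in every allocation that is EFX from her point of view she receives value
at least her maximin share. -/
theorem efx_pos_on_three_goods_imp_mms
    (v : Fin 4 → ℝ) (hv : ∀ g, 0 ≤ v g)
    (hthree : (Finset.univ.filter (fun g => 0 < v g)).card ≤ 3)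
    (A : Finset (Fin 4))
    (hefx : ∀ g ∈ Aᶜ, 0 < v g → ∑ x ∈ Aᶜ.erase g, v x ≤ ∑ x ∈ A, v x) :
    mms2 v ≤ ∑ x ∈ A, v x := by
  apply Real.sSup_le
  · rintro x ⟨S, rfl⟩
    exact key_min_le v hv hthree A hefx S
  · exact Finset.sum_nonneg fun i _ => hv i
end

section
/- Let there be two agents and four goods, all with positive value for agent 1, sorted so v_1(h_1) ≥ v_1(h_2) ≥ v_1(h_3) ≥ v_1(h_4). If an allocation (A_1, A_2) is EFX from agent 1's perspective and A_1 ∈ {{h_1}, {h_1,h_2}, {h_1,h_3}, {h_1,h_4}, {h_2,h_3}} or |A_1| ≥ 3, then v_1(A_1) ≥ μ_1(2, M). -/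
set_option maxHeartbeats 1000000 in
/-- two agents, four goods all of positive value for agent 1 sorted
decreasingly (h₁ = 0, h₂ = 1, h₃ = 2, h₄ = 3). If the allocation (A₁, A₁ᶜ) is EFX from
agent 1's perspective and A₁ ∈ {{h₁}, {h₁,h₂}, {h₁,h₃}, {h₁,h₄}, {h₂,h₃}} or |A₁| ≥ 3,
then v₁(A₁) ≥ μ₁(2, M). -/
theorem efx_cases_imp_mms
    (v : Fin 4 → ℝ) (hpos : ∀ g, 0 < v g)
    (hsorted : v 0 ≥ v 1 ∧ v 1 ≥ v 2 ∧ v 2 ≥ v 3)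
    (A : Finset (Fin 4))
    (hefx : ∀ g ∈ Aᶜ, 0 < v g → ∑ x ∈ Aᶜ.erase g, v x ≤ ∑ x ∈ A, v x)
    (hcase : A = {0} ∨ A = {0, 1} ∨ A = {0, 2} ∨ A = {0, 3} ∨ A = {1, 2} ∨ 3 ≤ A.card) :
    mms2 v ≤ ∑ x ∈ A, v x := by
  obtain ⟨h01, h12, h23⟩ := hsorted
  have p0 := hpos 0
  have p1 := hpos 1
  have p2 := hpos 2
  have p3 := hpos 3
  refine Real.sSup_le ?_ (Finset.sum_nonneg fun g _ => (hpos g).le)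
  rintro x ⟨S, rfl⟩
  have hc : ∀ S : Finset (Fin 4), ∑ g ∈ Sᶜ, v g = (v 0 + v 1 + v 2 + v 3) - ∑ g ∈ S, v g := by
    intro S
    have h := Finset.sum_add_sum_compl S v
    rw [Fin.sum_univ_four] at h
    linarith
  rcases hcase with rfl | rfl | rfl | rfl | rfl | hcard
  · have e1 := hefx 1 (by decide) p1
    have e2 := hefx 2 (by decide) p2
    have e3 := hefx 3 (by decide) p3
    rw [show (({0}ᶜ : Finset (Fin 4)).erase 1) = {2,3} from by decide,
        Finset.sum_pair (by decide), Finset.sum_singleton] at e1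
    rw [show (({0}ᶜ : Finset (Fin 4)).erase 2) = {1,3} from by decide,
        Finset.sum_pair (by decide), Finset.sum_singleton] at e2
    rw [show (({0}ᶜ : Finset (Fin 4)).erase 3) = {1,2} from by decide,
        Finset.sum_pair (by decide), Finset.sum_singleton] at e3
    rw [hc S, Finset.sum_singleton]
    fin_cases S <;>
      simp [Finset.sum_insert, Finset.mem_insert, min_le_iff] <;>
      first | linarith | (left; linarith) | (right; linarith)
  · have e2 := hefx 2 (by decide) p2
    have e3 := hefx 3 (by decide) p3
    rw [show (({0,1}ᶜ : Finset (Fin 4)).erase 2) = {3} from by decide,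
        Finset.sum_singleton, Finset.sum_pair (by decide)] at e2
    rw [show (({0,1}ᶜ : Finset (Fin 4)).erase 3) = {2} from by decide,
        Finset.sum_singleton, Finset.sum_pair (by decide)] at e3
    rw [hc S, Finset.sum_pair (by decide)]
    fin_cases S <;>
      simp [Finset.sum_insert, Finset.mem_insert, min_le_iff] <;>
      first | linarith | (left; linarith) | (right; linarith)
  · have e1 := hefx 1 (by decide) p1
    have e3 := hefx 3 (by decide) p3
    rw [show (({0,2}ᶜ : Finset (Fin 4)).erase 1) = {3} from by decide,
        Finset.sum_singleton, Finset.sum_pair (by decide)] at e1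
    rw [show (({0,2}ᶜ : Finset (Fin 4)).erase 3) = {1} from by decide,
        Finset.sum_singleton, Finset.sum_pair (by decide)] at e3
    rw [hc S, Finset.sum_pair (by decide)]
    fin_cases S <;>
      simp [Finset.sum_insert, Finset.mem_insert, min_le_iff] <;>
      first | linarith | (left; linarith) | (right; linarith)
  · have e1 := hefx 1 (by decide) p1
    have e2 := hefx 2 (by decide) p2
    rw [show (({0,3}ᶜ : Finset (Fin 4)).erase 1) = {2} from by decide,
        Finset.sum_singleton, Finset.sum_pair (by decide)] at e1
    rw [show (({0,3}ᶜ : Finset (Fin 4)).erase 2) = {1} from by decide,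
        Finset.sum_singleton, Finset.sum_pair (by decide)] at e2
    rw [hc S, Finset.sum_pair (by decide)]
    fin_cases S <;>
      simp [Finset.sum_insert, Finset.mem_insert, min_le_iff] <;>
      first | linarith | (left; linarith) | (right; linarith)
  · have e0 := hefx 0 (by decide) p0
    have e3 := hefx 3 (by decide) p3
    rw [show (({1,2}ᶜ : Finset (Fin 4)).erase 0) = {3} from by decide,
        Finset.sum_singleton, Finset.sum_pair (by decide)] at e0
    rw [show (({1,2}ᶜ : Finset (Fin 4)).erase 3) = {0} from by decide,
        Finset.sum_singleton, Finset.sum_pair (by decide)] at e3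
    rw [hc S, Finset.sum_pair (by decide)]
    fin_cases S <;>
      simp [Finset.sum_insert, Finset.mem_insert, min_le_iff] <;>
      first | linarith | (left; linarith) | (right; linarith)
  · have hcard' : Aᶜ.card ≤ 1 := by
      have h1 : Aᶜ.card = Fintype.card (Fin 4) - A.card := Finset.card_compl A
      simp only [Fintype.card_fin] at h1
      omega
    have hsub : S ⊆ A ∨ Sᶜ ⊆ A := by
      by_cases hex : ∃ g ∈ Aᶜ, g ∈ S
      · obtain ⟨g, hgA, hgS⟩ := hex
        right
        intro y hy
        by_contra hyA
        have hyc : y ∈ Aᶜ := Finset.mem_compl.mpr hyA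
        have : y = g := Finset.card_le_one.mp hcard' y hyc g hgA
        subst this
        exact (Finset.mem_compl.mp hy) hgS
      · left
        intro y hyS
        by_contra hyA
        exact hex ⟨y, Finset.mem_compl.mpr hyA, hyS⟩
    rcases hsub with h | h
    · exact min_le_of_left_le
        (Finset.sum_le_sum_of_subset_of_nonneg h fun g _ _ => (hpos g).le)
    · exact min_le_of_right_le
        (Finset.sum_le_sum_of_subset_of_nonneg h fun g _ _ => (hpos g).le)
end
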